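/- arXiv:1807.10193 — 6 statements merged into one kernel-verified Lean document; each statement's English description precedes it below -/
import Mathlib

section
/- Let k be a commutative ring, A a commutative k-algebra, p ∈ ℕ, Δ ⊆ ℕ^p a nonempty co-ideal, F an A-module, and r = (r_α)_{α∈Δ} a family of k-linear maps A → F. Then every r_α is a k-derivation from A to F if and only if the induced map r̃ : A[[s]]_Δ → F[[s]]_Δ is a derivation over k[[s]]_Δ of the ring A[[s]]_Δ with values in the A[[s]]_Δ-module F[[s]]_Δ (i.e. r̃ is k[[s]]_Δ-linear and r̃(ab) = a·r̃(b) + b·r̃(a) for all a, b ∈ A[[s]]_Δ). Consequently, r ↦ r̃ is an A[[s]]_Δ-linear isomorphism Der_k(A,F)[[s]]_Δ ≅ Der_{k[[s]]_Δ}(A[[s]]_Δ, F[[s]]_Δ). -/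
/-!
The forward direction is a coefficient computation: `r̃(ab)_α` expands, by the Leibniz rule for
each `r_β` with `β ≤ α ∈ Δ`, into the two convolutions `a·r̃(b)` and `b·r̃(a)`. Evaluating on
constant series `x s^0` gives back the Leibniz rule for `r_α`, and also injectivity of `r ↦ r̃`.

For surjectivity, let `g` be additive and `k[[s]]_Δ`-linear at `α`. Multiplying by the monomials
`s^γ` with `γ ≰ α` shows that `g(a)_α` only depends on `a_β` for `β ≤ α`, and writing that part
of `a` as `∑_{β ≤ α} a_β s^β` gives `g(a)_α = ∑_{β ≤ α} g(a_β s^0)_{α-β}`, i.e. `g = r̃` for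
`r_α(x) = g(x s^0)_α`.
-/

open scoped Classical

namespace HS

/-- multi-indices in `ℕ^p` -/
abbrev MIdx (p : ℕ) := Fin p → ℕ

/-- the total weight `|α|` of a multi-index -/
def wt {p : ℕ} (α : MIdx p) : ℕ := ∑ i, α i

/-- a non-empty co-ideal of `ℕ^p` -/
def IsCoideal {p : ℕ} (Δ : Set (MIdx p)) : Prop :=
  Δ.Nonempty ∧ ∀ ⦃α : MIdx p⦄, α ∈ Δ → ∀ ⦃β : MIdx p⦄, β ≤ α → β ∈ Δ

/-- Convolution product of two power series, given by their coefficient families: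
this is the multiplication of `R[[s]]_Δ` (in terms of representatives). -/
def sconv {p : ℕ} {R : Type*} [NonUnitalNonAssocSemiring R] (f g : MIdx p → R) : MIdx p → R :=
  fun α => ∑ β ∈ Finset.Iic α, f β * g (α - β)

/-- Applying a series of linear operators to a series of module elements; for an
operator family `f`, `fapply f` is the induced `k[[s]]_Δ`-linear map `f̃ = ∑ f_β s^β`. -/
def fapply {p : ℕ} {k M N : Type*} [Semiring k] [AddCommMonoid M] [AddCommMonoid N]
    [Module k M] [Module k N] (f : MIdx p → (M →ₗ[k] N)) (m : MIdx p → M) : MIdx p → N :=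
  fun α => ∑ β ∈ Finset.Iic α, f β (m (α - β))

/-- a series of scalars acting on a series of module elements:
the module structure of `M[[s]]_Δ` over `A[[s]]_Δ` (in terms of representatives). -/
def smul' {p : ℕ} {A M : Type*} [Semiring A] [AddCommMonoid M] [Module A M]
    (a : MIdx p → A) (m : MIdx p → M) : MIdx p → M :=
  fun α => ∑ β ∈ Finset.Iic α, a β • m (α - β)

/-- the unit (delta) series `1` -/
def one' {p : ℕ} {R : Type*} [Zero R] [One R] : MIdx p → R :=
  fun α => if α = 0 then 1 else 0

/-- `D` is a `(p,Δ)`-variate Hasse–Schmidt derivation of `A` over `k`: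
`D_0 = id` and the Leibniz rule `D_α(xy) = ∑_{β+γ=α} D_β(x) D_γ(y)` for `α ∈ Δ`. -/
def IsHS (k A : Type*) [CommRing k] [CommRing A] [Algebra k A] {p : ℕ}
    (Δ : Set (MIdx p)) (D : MIdx p → Module.End k A) : Prop :=
  D 0 = 1 ∧ ∀ α ∈ Δ, ∀ x y : A,
    D α (x * y) = ∑ β ∈ Finset.Iic α, D β x * D (α - β) y

section IicSums

variable {p : ℕ} {M : Type*} [AddCommMonoid M]

theorem sum_Iic_reflect (α : MIdx p) (f : MIdx p → M) :
    ∑ β ∈ Finset.Iic α, f β = ∑ β ∈ Finset.Iic α, f (α - β) :=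
  Finset.sum_nbij' (α - ·) (α - ·) (fun _ _ => by simp) (fun _ _ => by simp)
    (fun _ hβ => tsub_tsub_cancel_of_le (Finset.mem_Iic.mp hβ))
    (fun _ hβ => tsub_tsub_cancel_of_le (Finset.mem_Iic.mp hβ))
    (fun _ hβ => by rw [tsub_tsub_cancel_of_le (Finset.mem_Iic.mp hβ)])

theorem sum_Iic_sum_Iic_tsub_comm (α : MIdx p) (f : MIdx p → MIdx p → M) :
    ∑ β ∈ Finset.Iic α, ∑ γ ∈ Finset.Iic (α - β), f β γ
      = ∑ γ ∈ Finset.Iic α, ∑ β ∈ Finset.Iic (α - γ), f β γ := by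
  refine Finset.sum_comm' fun β γ => ?_
  simp only [Finset.mem_Iic, Pi.le_def, Pi.sub_apply, ← forall_and]
  exact forall_congr' fun i => by omega

theorem sum_Iic_sum_Iic_tsub (α : MIdx p) (f : MIdx p → MIdx p → M) :
    ∑ β ∈ Finset.Iic α, ∑ δ ∈ Finset.Iic β, f δ (β - δ)
      = ∑ δ ∈ Finset.Iic α, ∑ γ ∈ Finset.Iic (α - δ), f δ γ := by
  rw [sum_Iic_reflect, sum_Iic_sum_Iic_tsub_comm]
  refine Finset.sum_congr rfl fun δ hδ => ?_
  rw [sum_Iic_reflect]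
  refine Finset.sum_congr rfl fun γ hγ => ?_
  congr 1
  ext i
  have := Finset.mem_Iic.mp hδ i
  have := Finset.mem_Iic.mp hγ i
  simp only [Pi.sub_apply] at *
  omega

end IicSums

section Series

variable {p : ℕ}

theorem smul'_congr {R M : Type*} [Semiring R] [AddCommMonoid M] [Module R M]
    (c : MIdx p → R) {m m' : MIdx p → M} {α : MIdx p} (h : ∀ β ≤ α, m β = m' β) :
    smul' c m α = smul' c m' α :=
  Finset.sum_congr rfl fun _ _ => by rw [h _ tsub_le_self]

theorem smul'_single {R M : Type*} [Semiring R] [AddCommMonoid M] [Module R M]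
    (γ : MIdx p) (c : R) (m : MIdx p → M) (α : MIdx p) :
    smul' (Pi.single γ c) m α = if γ ≤ α then c • m (α - γ) else 0 := by
  simp only [smul', Pi.single_apply, ite_smul, zero_smul, Finset.sum_ite_eq', Finset.mem_Iic]

theorem smul'_single_zero {R M : Type*} [Semiring R] [AddCommMonoid M] [Module R M]
    (c : R) (m : MIdx p → M) : smul' (Pi.single 0 c) m = c • m := by
  ext α
  simp [smul'_single]

theorem single_eq_smul'_single_zero (R : Type*) {M : Type*} [Semiring R] [AddCommMonoid M]
    [Module R M] (γ : MIdx p) (x : M) :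
    Pi.single γ x = smul' (Pi.single γ (1 : R)) (Pi.single 0 x) := by
  ext ρ
  rw [smul'_single, one_smul]
  by_cases h : γ ≤ ρ
  · rcases eq_or_ne ρ γ with rfl | hne
    · simp
    · have : ρ - γ ≠ 0 := fun e => hne (le_antisymm (tsub_eq_zero_iff_le.mp e) h)
      simp [h, hne, this]
  · simp [h, Pi.single_eq_of_ne fun e : ρ = γ => h e.ge]

/-- A series vanishing outside `γ + ℕ^p` is divisible by `s^γ`. -/
theorem smul'_single_one_shift {R M : Type*} [Semiring R] [AddCommMonoid M] [Module R M]
    {γ : MIdx p} {m : MIdx p → M} (h : ∀ ρ, ¬ γ ≤ ρ → m ρ = 0) :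
    smul' (Pi.single γ (1 : R)) (fun ρ => m (ρ + γ)) = m := by
  ext ρ
  rw [smul'_single]
  split_ifs with hγ
  · rw [one_smul, tsub_add_cancel_of_le hγ]
  · exact (h ρ hγ).symm

theorem sconv_single_zero {R : Type*} [Semiring R] (x y : R) :
    sconv (Pi.single (0 : MIdx p) x) (Pi.single 0 y) = Pi.single 0 (x * y) :=
  (smul'_single_zero x _).trans (Pi.single_smul' 0 x y).symm

end Series

section Fapply

variable {p : ℕ} {k M N : Type*} [Semiring k] [AddCommMonoid M] [AddCommMonoid N]
  [Module k M] [Module k N]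

theorem fapply_congr (f : MIdx p → M →ₗ[k] N) {m m' : MIdx p → M} {α : MIdx p}
    (h : ∀ β ≤ α, m β = m' β) : fapply f m α = fapply f m' α :=
  Finset.sum_congr rfl fun _ _ => by rw [h _ tsub_le_self]

theorem fapply_add_left (f g : MIdx p → M →ₗ[k] N) (m : MIdx p → M) (α : MIdx p) :
    fapply (f + g) m α = fapply f m α + fapply g m α := by
  simp only [fapply, Pi.add_apply, LinearMap.add_apply, Finset.sum_add_distrib]

theorem fapply_add_right (f : MIdx p → M →ₗ[k] N) (m m' : MIdx p → M) (α : MIdx p) :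
    fapply f (m + m') α = fapply f m α + fapply f m' α := by
  simp only [fapply, Pi.add_apply, map_add, Finset.sum_add_distrib]

theorem fapply_single_zero (f : MIdx p → M →ₗ[k] N) (x : M) (α : MIdx p) :
    fapply f (Pi.single 0 x) α = f α x := by
  refine (Finset.sum_eq_single_of_mem α (Finset.mem_Iic.mpr le_rfl) fun β hβ hne => ?_).trans
    (by simp)
  have : α - β ≠ 0 := fun e => hne (le_antisymm (Finset.mem_Iic.mp hβ) (tsub_eq_zero_iff_le.mp e))
  simp [this]

theorem fapply_smul' (f : MIdx p → M →ₗ[k] N) (c : MIdx p → k) (m : MIdx p → M) (α : MIdx p) :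
    fapply f (smul' c m) α = smul' c (fapply f m) α := by
  simp only [fapply, smul', map_sum, map_smul, Finset.smul_sum]
  rw [sum_Iic_sum_Iic_tsub_comm]
  simp only [tsub_right_comm]

theorem fapply_smul'_left {A : Type*} [Semiring A] [Module A N] [SMulCommClass k A N]
    (a : MIdx p → A) (f : MIdx p → M →ₗ[k] N) (m : MIdx p → M) (α : MIdx p) :
    fapply (smul' a f) m α = smul' a (fapply f m) α := by
  simp only [fapply, smul', LinearMap.coe_sum, Finset.sum_apply, LinearMap.smul_apply,
    Finset.smul_sum]
  rw [← sum_Iic_sum_Iic_tsub (f := fun δ γ => a δ • f γ (m (α - δ - γ)))]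
  refine Finset.sum_congr rfl fun β _ => Finset.sum_congr rfl fun δ hδ => ?_
  rw [tsub_tsub, add_tsub_cancel_of_le (Finset.mem_Iic.mp hδ)]

end Fapply

section Leibniz

variable {p : ℕ} {k A F : Type*} [Semiring k] [Semiring A] [Module k A] [AddCommMonoid F]
  [Module k F] [Module A F]

theorem fapply_sconv (r : MIdx p → A →ₗ[k] F) {α : MIdx p}
    (hr : ∀ β ≤ α, ∀ x y : A, r β (x * y) = x • r β y + y • r β x) (a b : MIdx p → A) :
    fapply r (sconv a b) α = smul' a (fapply r b) α + smul' b (fapply r a) α := by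
  have hterm : ∀ β ∈ Finset.Iic α, r β (sconv a b (α - β))
      = ∑ γ ∈ Finset.Iic (α - β), a γ • r β (b (α - β - γ))
        + ∑ γ ∈ Finset.Iic (α - β), b γ • r β (a (α - β - γ)) := by
    intro β hβ
    rw [sconv, map_sum, sum_Iic_reflect (α - β) (fun γ => b γ • _)]
    simp only [hr β (Finset.mem_Iic.mp hβ), Finset.sum_add_distrib]
    congr 1
    refine Finset.sum_congr rfl fun γ hγ => ?_
    rw [tsub_tsub_cancel_of_le (Finset.mem_Iic.mp hγ)]
  simp only [fapply, Finset.sum_congr rfl hterm, Finset.sum_add_distrib, smul', Finset.smul_sum]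
  congr 1 <;> rw [sum_Iic_sum_Iic_tsub_comm] <;> simp only [tsub_right_comm]

theorem apply_single_zero_mul {g : (MIdx p → A) → MIdx p → F} {α : MIdx p}
    (hg : ∀ a b, g (sconv a b) α = smul' a (g b) α + smul' b (g a) α) (x y : A) :
    g (Pi.single 0 (x * y)) α = x • g (Pi.single 0 y) α + y • g (Pi.single 0 x) α := by
  rw [← sconv_single_zero, hg, smul'_single_zero, smul'_single_zero, Pi.smul_apply,
    Pi.smul_apply]

end Leibniz

section Coefficients

variable {p : ℕ} {k A F : Type*} [Semiring k] [AddCommMonoid A] [Module k A] [AddCommGroup F]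
  [Module k F] {g : (MIdx p → A) → MIdx p → F} {α : MIdx p}

def evalLinearMap (hadd : ∀ a b, g (a + b) α = g a α + g b α)
    (hsmul : ∀ (c : MIdx p → k) a, g (smul' c a) α = smul' c (g a) α) :
    (MIdx p → A) →ₗ[k] F where
  toFun a := g a α
  map_add' := hadd
  map_smul' c a := by
    simpa only [smul'_single_zero, Pi.smul_apply, RingHom.id_apply] using hsmul (Pi.single 0 c) a

theorem apply_eq_zero_of_not_le (hsmul : ∀ (c : MIdx p → k) a, g (smul' c a) α = smul' c (g a) α)
    {γ : MIdx p} (hγ : ¬ γ ≤ α) {b : MIdx p → A} (hb : ∀ ρ, ¬ γ ≤ ρ → b ρ = 0) : g b α = 0 := by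
  rw [← smul'_single_one_shift (R := k) hb, hsmul, smul'_single, if_neg hγ]

theorem apply_eq_zero_of_forall_le (hadd : ∀ a b, g (a + b) α = g a α + g b α)
    (hsmul : ∀ (c : MIdx p → k) a, g (smul' c a) α = smul' c (g a) α)
    {b : MIdx p → A} (hb : ∀ ρ ≤ α, b ρ = 0) : g b α = 0 := by
  -- Induct on a set `S` of coordinates: the part of `b` with `ρ i > α i` is a multiple of
  -- `s_i ^ (α i + 1)`, which `g` kills at `α`.
  suffices ∀ (S : Finset (Fin p)) (b : MIdx p → A),
      (∀ ρ, (∀ i ∈ S, ρ i ≤ α i) → b ρ = 0) → g b α = 0 from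
    this Finset.univ b fun ρ hρ => hb ρ fun i => hρ i (Finset.mem_univ i)
  intro S
  induction S using Finset.induction_on with
  | empty =>
    intro b hb
    rw [show b = 0 from funext fun ρ => hb ρ (by simp)]
    exact map_zero (evalLinearMap hadd hsmul)
  | insert i S _ ih =>
    intro b hb
    have hsplit : b = (fun ρ => if ρ i ≤ α i then b ρ else 0)
        + fun ρ => if ρ i ≤ α i then 0 else b ρ := by
      ext ρ
      by_cases h : ρ i ≤ α i <;> simp [h]
    rw [hsplit, hadd, ih, apply_eq_zero_of_not_le hsmul (γ := Pi.single i (α i + 1)), add_zero]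
    · intro h
      simpa using h i
    · intro ρ hρ
      have : ρ i ≤ α i := by
        by_contra! hi
        refine hρ fun j => ?_
        rcases eq_or_ne j i with rfl | hj
        · simpa using hi
        · simp [hj]
      simp [this]
    · intro ρ hρ
      split_ifs with hi
      · exact hb ρ ((Finset.forall_mem_insert _ _ _).mpr ⟨hi, hρ⟩)
      · rfl

theorem apply_eq_sum_Iic (hadd : ∀ a b, g (a + b) α = g a α + g b α)
    (hsmul : ∀ (c : MIdx p → k) a, g (smul' c a) α = smul' c (g a) α) (a : MIdx p → A) :
    g a α = ∑ β ∈ Finset.Iic α, g (Pi.single 0 (a β)) (α - β) := by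
  have hsplit : a = (∑ β ∈ Finset.Iic α, Pi.single β (a β))
      + fun ρ => if ρ ≤ α then 0 else a ρ := by
    ext ρ
    by_cases h : ρ ≤ α <;> simp [Finset.sum_apply, Pi.single_apply, h]
  calc g a α = g (∑ β ∈ Finset.Iic α, Pi.single β (a β)) α := by
        conv_lhs => rw [hsplit]
        rw [hadd, apply_eq_zero_of_forall_le hadd hsmul fun ρ hρ => if_pos hρ, add_zero]
    _ = ∑ β ∈ Finset.Iic α, g (Pi.single β (a β)) α := map_sum (evalLinearMap hadd hsmul) _ _
    _ = ∑ β ∈ Finset.Iic α, g (Pi.single 0 (a β)) (α - β) := by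
        refine Finset.sum_congr rfl fun β hβ => ?_
        rw [single_eq_smul'_single_zero k, hsmul, smul'_single, if_pos (Finset.mem_Iic.mp hβ),
          one_smul]

theorem exists_fapply_eq {Δ : Set (MIdx p)} (hΔ : IsCoideal Δ)
    (hadd : ∀ a b : MIdx p → A, ∀ α ∈ Δ, g (a + b) α = g a α + g b α)
    (hsmul : ∀ (c : MIdx p → k) (a : MIdx p → A), ∀ α ∈ Δ, g (smul' c a) α = smul' c (g a) α) :
    ∃ r : MIdx p → A →ₗ[k] F, (∀ α, α ∉ Δ → r α = 0)
      ∧ (∀ α ∈ Δ, ∀ x, r α x = g (Pi.single 0 x) α)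
      ∧ ∀ a, ∀ α ∈ Δ, fapply r a α = g a α := by
  refine ⟨fun α => if h : α ∈ Δ then
      (evalLinearMap (hadd · · α h) (hsmul · · α h)).comp (LinearMap.single k (fun _ => A) 0)
    else 0, fun α h => dif_neg h, fun α h x => by simp [h, evalLinearMap], fun a α hα => ?_⟩
  rw [apply_eq_sum_Iic (hadd · · α hα) (hsmul · · α hα), fapply, sum_Iic_reflect]
  refine Finset.sum_congr rfl fun β hβ => ?_
  have hβ := Finset.mem_Iic.mp hβ
  rw [dif_pos (hΔ.2 hα tsub_le_self), tsub_tsub_cancel_of_le hβ]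
  rfl

end Coefficients

section Correspondence

variable {p : ℕ} {k A F : Type*} [Semiring k] [Semiring A] [Module k A] [AddCommGroup F]
  [Module k F] {Δ : Set (MIdx p)}

noncomputable def truncFapply (Δ : Set (MIdx p)) (r : MIdx p → A →ₗ[k] F) :
    (MIdx p → A) → MIdx p → F :=
  fun a α => if α ∈ Δ then fapply r a α else 0

theorem truncFapply_of_mem (r : MIdx p → A →ₗ[k] F) (a : MIdx p → A) {α : MIdx p}
    (hα : α ∈ Δ) : truncFapply Δ r a α = fapply r a α :=
  if_pos hα

theorem truncFapply_of_not_mem (r : MIdx p → A →ₗ[k] F) (a : MIdx p → A) {α : MIdx p}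
    (hα : α ∉ Δ) : truncFapply Δ r a α = 0 :=
  if_neg hα

theorem smul'_truncFapply {R : Type*} [Semiring R] [Module R F] (hΔ : IsCoideal Δ)
    (c : MIdx p → R) (r : MIdx p → A →ₗ[k] F) (a : MIdx p → A) {α : MIdx p} (hα : α ∈ Δ) :
    smul' c (truncFapply Δ r a) α = smul' c (fapply r a) α :=
  smul'_congr c fun _ hβ => truncFapply_of_mem r a (hΔ.2 hα hβ)

variable [Module A F]

theorem forall_map_mul_iff_fapply_sconv (hΔ : IsCoideal Δ) (r : MIdx p → A →ₗ[k] F) :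
    (∀ α ∈ Δ, ∀ x y : A, r α (x * y) = x • r α y + y • r α x)
      ↔ ∀ a b : MIdx p → A, ∀ α ∈ Δ,
          fapply r (sconv a b) α = smul' a (fapply r b) α + smul' b (fapply r a) α := by
  refine ⟨fun hr a b α hα => fapply_sconv r (fun β hβ => hr β (hΔ.2 hα hβ)) a b,
    fun hr α hα x y => ?_⟩
  simpa only [fapply_single_zero] using apply_single_zero_mul (hr · · α hα) x y

/-- `Der_k(A,F)[[s]]_Δ`, with families normalised to vanish off `Δ`. -/
def IsDerivationFamily (Δ : Set (MIdx p)) (r : MIdx p → A →ₗ[k] F) : Prop :=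
  (∀ α : MIdx p, α ∉ Δ → r α = 0) ∧ ∀ α ∈ Δ, ∀ x y : A, r α (x * y) = x • r α y + y • r α x

variable (k) in
/-- Representatives of `k[[s]]_Δ`-derivations `A[[s]]_Δ → F[[s]]_Δ`, normalised to vanish
off `Δ`. -/
def IsSeriesDerivation (Δ : Set (MIdx p)) (g : (MIdx p → A) → MIdx p → F) : Prop :=
  (∀ (a : MIdx p → A) (α : MIdx p), α ∉ Δ → g a α = 0)
    ∧ (∀ a b : MIdx p → A, Set.EqOn a b Δ → g a = g b)
    ∧ (∀ a b : MIdx p → A, ∀ α ∈ Δ, g (a + b) α = g a α + g b α)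
    ∧ (∀ (c : MIdx p → k) (a : MIdx p → A), ∀ α ∈ Δ, g (smul' c a) α = smul' c (g a) α)
    ∧ (∀ a b : MIdx p → A, ∀ α ∈ Δ, g (sconv a b) α = smul' a (g b) α + smul' b (g a) α)

theorem mapsTo_truncFapply (hΔ : IsCoideal Δ) :
    Set.MapsTo (truncFapply (k := k) (A := A) (F := F) Δ) {r | IsDerivationFamily Δ r}
      {g | IsSeriesDerivation k Δ g} := by
  rintro r ⟨-, hr⟩
  refine ⟨fun a α hα => truncFapply_of_not_mem r a hα, fun a b hab => funext fun α => ?_,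
    fun a b α hα => ?_, fun c a α hα => ?_, fun a b α hα => ?_⟩
  · by_cases hα : α ∈ Δ
    · simp only [truncFapply_of_mem r _ hα]
      exact fapply_congr r fun β hβ => hab (hΔ.2 hα hβ)
    · simp only [truncFapply_of_not_mem r _ hα]
  · simp only [truncFapply_of_mem r _ hα, fapply_add_right]
  · rw [truncFapply_of_mem r _ hα, fapply_smul', smul'_truncFapply hΔ c r a hα]
  · rw [truncFapply_of_mem r _ hα, smul'_truncFapply hΔ a r b hα, smul'_truncFapply hΔ b r a hα,
      (forall_map_mul_iff_fapply_sconv hΔ r).mp hr a b α hα]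

theorem injOn_truncFapply :
    Set.InjOn (truncFapply (k := k) (A := A) (F := F) Δ) {r | IsDerivationFamily Δ r} := by
  intro r₁ h₁ r₂ h₂ heq
  funext α
  by_cases hα : α ∈ Δ
  · ext x
    simpa only [truncFapply_of_mem _ _ hα, fapply_single_zero] using
      congr_fun (congr_fun heq (Pi.single 0 x)) α
  · rw [h₁.1 α hα, h₂.1 α hα]

theorem surjOn_truncFapply (hΔ : IsCoideal Δ) :
    Set.SurjOn (truncFapply (k := k) (A := A) (F := F) Δ) {r | IsDerivationFamily Δ r}
      {g | IsSeriesDerivation k Δ g} := by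
  rintro g ⟨hsupp, -, hadd, hsmul, hleib⟩
  obtain ⟨r, hr0, hr, hfapply⟩ := exists_fapply_eq hΔ hadd hsmul
  refine ⟨r, ⟨hr0, fun α hα x y => ?_⟩, funext fun a => funext fun α => ?_⟩
  · simpa only [hr α hα] using apply_single_zero_mul (hleib · · α hα) x y
  · by_cases hα : α ∈ Δ
    · rw [truncFapply_of_mem r a hα, hfapply a α hα]
    · rw [truncFapply_of_not_mem r a hα, hsupp a α hα]

theorem bijOn_truncFapply (hΔ : IsCoideal Δ) :
    Set.BijOn (truncFapply (k := k) (A := A) (F := F) Δ) {r | IsDerivationFamily Δ r}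
      {g | IsSeriesDerivation k Δ g} :=
  ⟨mapsTo_truncFapply hΔ, injOn_truncFapply, surjOn_truncFapply hΔ⟩

end Correspondence

/-- For a family `r = (r_α)_{α∈Δ}` of `k`-linear maps `A → F`, every
`r_α` (`α ∈ Δ`) is a `k`-derivation iff the induced `k[[s]]_Δ`-linear map
`r̃ : A[[s]]_Δ → F[[s]]_Δ` is a derivation over `k[[s]]_Δ`; consequently `r ↦ r̃` is
an `A[[s]]_Δ`-linear isomorphism `Der_k(A,F)[[s]]_Δ ≅ Der_{k[[s]]_Δ}(A[[s]]_Δ, F[[s]]_Δ)`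
(maps `A[[s]]_Δ → F[[s]]_Δ` being modelled as maps on coefficient families which
descend to the quotients, i.e. respect agreement on `Δ`, normalized to have values
supported in `Δ`). -/
theorem stmt2 (k A F : Type*) [CommRing k] [CommRing A] [Algebra k A]
    [AddCommGroup F] [Module k F] [Module A F] [IsScalarTower k A F]
    (p : ℕ) (Δ : Set (MIdx p)) (hΔ : IsCoideal Δ)
    (r : MIdx p → (A →ₗ[k] F)) :
    -- the equivalence
    ((∀ α ∈ Δ, ∀ x y : A, r α (x * y) = x • r α y + y • r α x)
      ↔ ((∀ (c : MIdx p → k) (a : MIdx p → A), ∀ α ∈ Δ,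
            fapply r (smul' c a) α = smul' c (fapply r a) α)
          ∧ (∀ a b : MIdx p → A, ∀ α ∈ Δ,
            fapply r (sconv a b) α = smul' a (fapply r b) α + smul' b (fapply r a) α)))
    -- consequently: `r ↦ r̃` is a bijection from `Der_k(A,F)[[s]]_Δ` onto
    -- `Der_{k[[s]]_Δ}(A[[s]]_Δ, F[[s]]_Δ)` ...
    ∧ Set.BijOn
        (fun (r : MIdx p → (A →ₗ[k] F)) (a : MIdx p → A) (α : MIdx p) =>
          if α ∈ Δ then fapply r a α else 0)
        {r : MIdx p → (A →ₗ[k] F) | (∀ α : MIdx p, α ∉ Δ → r α = 0)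
          ∧ ∀ α ∈ Δ, ∀ x y : A, r α (x * y) = x • r α y + y • r α x}
        {g : (MIdx p → A) → (MIdx p → F) |
          (∀ (a : MIdx p → A) (α : MIdx p), α ∉ Δ → g a α = 0)
          ∧ (∀ a b : MIdx p → A, Set.EqOn a b Δ → g a = g b)
          ∧ (∀ a b : MIdx p → A, ∀ α ∈ Δ, g (a + b) α = g a α + g b α)
          ∧ (∀ (c : MIdx p → k) (a : MIdx p → A), ∀ α ∈ Δ,
              g (smul' c a) α = smul' c (g a) α)
          ∧ (∀ a b : MIdx p → A, ∀ α ∈ Δ,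
              g (sconv a b) α = smul' a (g b) α + smul' b (g a) α)}
    -- ... which is `A[[s]]_Δ`-linear (additivity and `A[[s]]_Δ`-homogeneity of `r ↦ r̃`)
    ∧ (∀ r₁ r₂ : MIdx p → (A →ₗ[k] F), ∀ a : MIdx p → A, ∀ α ∈ Δ,
        fapply (r₁ + r₂) a α = fapply r₁ a α + fapply r₂ a α)
    ∧ (∀ (aS : MIdx p → A) (r₁ : MIdx p → (A →ₗ[k] F)) (b : MIdx p → A), ∀ α ∈ Δ,
        fapply (fun γ => ∑ β ∈ Finset.Iic γ, aS β • r₁ (γ - β)) b α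
          = smul' aS (fapply r₁ b) α) := by
  refine ⟨⟨fun hr => ⟨fun c a α _ => fapply_smul' r c a α,
      (forall_map_mul_iff_fapply_sconv hΔ r).mp hr⟩,
    fun hr => (forall_map_mul_iff_fapply_sconv hΔ r).mpr hr.2⟩,
    bijOn_truncFapply hΔ, fun r₁ r₂ a α _ => fapply_add_left r₁ r₂ a α,
    fun aS r₁ b α _ => fapply_smul'_left aS r₁ b α⟩

end HS
end

section
/- Let k be a commutative ring, A a commutative k-algebra, E and F two A-modules, p ∈ ℕ, and Δ' ⊆ Δ ⊆ ℕ^p nonempty co-ideals. Then every k[[s]]_Δ-linear map f : E[[s]]_Δ → F[[s]]_Δ is continuous when M[[s]]_Δ ≅ M^Δ is given the product of discrete topologies; f maps the submodule Δ'_E/Δ_E (classes of series whose support is disjoint from Δ') into Δ'_F/Δ_F; and there is a unique k[[s]]_{Δ'}-linear map f̄ : E[[s]]_{Δ'} → F[[s]]_{Δ'} such that τ_{ΔΔ'} ∘ f = f̄ ∘ τ_{ΔΔ'}, where τ_{ΔΔ'} denotes the truncation maps M[[s]]_Δ → M[[s]]_{Δ'} sending Σ_{α∈Δ} m_α s^α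 to Σ_{α∈Δ'} m_α s^α. -/
/-!
A `k[[s]]_Δ`-linear map is local: the coefficient of `f m` at `α` only depends on the
coefficients of `m` at the finitely many `β ≤ α`. Indeed, a series vanishing on `{β ≤ α}` is a
finite sum `∑ᵢ s^{dᵢ} mᵢ` with `dᵢ = (αᵢ + 1) eᵢ` (sort its support by the first coordinate at
which it exceeds `α`), and every `s^{dᵢ} x` has zero coefficient at `α` because `dᵢ ≰ α`.
Locality gives continuity for the product of discrete topologies, and, `Δ'` being a co-ideal, it
makes `τ ∘ f` constant on the fibres of the surjective truncation `τ : E[[s]]_Δ → E[[s]]_{Δ'}`,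
so it factors uniquely as `f̄ ∘ τ`; `f̄` inherits linearity because `τ` is additive and
multiplicative.
-/

open scoped Classical

namespace HS

/-- the honest model of `M[[s]]_Δ`: families of coefficients indexed by `Δ` -/
def SeriesOn {p : ℕ} (Δ : Set (MIdx p)) (M : Type*) := {α : MIdx p // α ∈ Δ} → M

/-- the scalar action of `k[[s]]_Δ` on `M[[s]]_Δ`, in the honest model -/
def ksmulOn {p : ℕ} {Δ : Set (MIdx p)} (hΔ : IsCoideal Δ) {k M : Type*}
    [Semiring k] [AddCommMonoid M] [Module k M]
    (c : SeriesOn Δ k) (m : SeriesOn Δ M) : SeriesOn Δ M :=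
  fun α => ∑ β ∈ (Finset.Iic (α : MIdx p)).attach,
    c ⟨(β : MIdx p), hΔ.2 α.2 (Finset.mem_Iic.mp β.2)⟩ •
      m ⟨(α : MIdx p) - (β : MIdx p), hΔ.2 α.2 tsub_le_self⟩

/-- truncation `M[[s]]_Δ → M[[s]]_{Δ'}` for `Δ' ⊆ Δ` -/
def truncOn {p : ℕ} {Δ Δ' : Set (MIdx p)} (hsub : Δ' ⊆ Δ) {M : Type*}
    (m : SeriesOn Δ M) : SeriesOn Δ' M :=
  fun α => m ⟨(α : MIdx p), hsub α.2⟩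

instance {p : ℕ} {Δ : Set (MIdx p)} {M : Type*} [AddCommMonoid M] :
    AddCommMonoid (SeriesOn Δ M) := Pi.addCommMonoid

lemma continuous_of_dependsOn_of_finite {ι β : Type*} {α : ι → Type*}
    [∀ i, TopologicalSpace (α i)] [∀ i, DiscreteTopology (α i)] [TopologicalSpace β]
    {g : (∀ i, α i) → β} {s : Set ι} (hg : DependsOn g s) (hs : s.Finite) : Continuous g := by
  refine IsLocallyConstant.continuous fun t => isOpen_iff_forall_mem_open.mpr fun x hx => ?_
  exact ⟨s.pi fun i => {x i}, fun y hy => by rwa [Set.mem_preimage, hg hy],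
    isOpen_set_pi hs fun _ _ => isOpen_discrete _, fun _ _ => rfl⟩

variable {p : ℕ}

lemma single_le_iff {i : Fin p} {a : ℕ} {γ : MIdx p} : Pi.single i a ≤ γ ↔ a ≤ γ i := by
  refine ⟨fun h => by simpa using h i, fun h j => ?_⟩
  by_cases hj : j = i
  · subst hj; simpa using h
  · simp [hj]

def IsFirstExcess (α γ : MIdx p) (i : Fin p) : Prop :=
  α i < γ i ∧ ∀ j < i, γ j ≤ α j

lemma existsUnique_isFirstExcess {α γ : MIdx p} (h : ¬γ ≤ α) : ∃! i, IsFirstExcess α γ i := by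
  have hne : {i | α i < γ i}.Nonempty := by simpa [Pi.le_def, Set.Nonempty] using h
  obtain ⟨i, hi, hmin⟩ := wellFounded_lt.has_min _ hne
  refine ⟨i, ⟨hi, fun j hj => not_lt.mp fun hlt => hmin j hlt hj⟩, fun j hj => ?_⟩
  rcases lt_trichotomy j i with hji | rfl | hij
  · exact absurd (hmin j hj.1) (not_not.mpr hji)
  · rfl
  · exact absurd hi (not_lt.mpr (hj.2 i hij))

namespace SeriesOn

variable {Δ : Set (MIdx p)}

lemma add_apply {M : Type*} [AddCommMonoid M] (m m' : SeriesOn Δ M) (γ : {α // α ∈ Δ}) :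
    (m + m') γ = m γ + m' γ := rfl

lemma sum_apply {M ι : Type*} [AddCommMonoid M] (s : Finset ι) (m : ι → SeriesOn Δ M)
    (γ : {α // α ∈ Δ}) : (∑ i ∈ s, m i) γ = ∑ i ∈ s, m i γ :=
  Finset.sum_apply γ s m

def monomial {k : Type*} [Zero k] [One k] (δ : MIdx p) : SeriesOn Δ k :=
  fun β => if (β : MIdx p) = δ then 1 else 0

lemma ksmulOn_monomial_apply {k M : Type*} [Semiring k] [AddCommMonoid M] [Module k M]
    (hΔ : IsCoideal Δ) (δ : MIdx p) (m : SeriesOn Δ M) (γ : {α // α ∈ Δ}) :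
    ksmulOn hΔ (monomial (k := k) δ) m γ
      = if δ ≤ (γ : MIdx p) then m ⟨γ - δ, hΔ.2 γ.2 tsub_le_self⟩ else 0 := by
  simp only [ksmulOn, monomial, ite_smul, one_smul, zero_smul]
  rw [Finset.sum_attach (Finset.Iic (γ : MIdx p))
    (fun β => if β = δ then m ⟨γ - β, hΔ.2 γ.2 tsub_le_self⟩ else 0)]
  simp

/-- The part of `m` supported where `i` is the first coordinate exceeding `α`, divided by
`s^{(αᵢ + 1) eᵢ}`. -/
noncomputable def excessPart {M : Type*} [Zero M] (α : MIdx p) (i : Fin p) (m : SeriesOn Δ M) :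
    SeriesOn Δ M := fun β =>
  if h : (β : MIdx p) + Pi.single i (α i + 1) ∈ Δ ∧
      IsFirstExcess α ((β : MIdx p) + Pi.single i (α i + 1)) i then
    m ⟨_, h.1⟩
  else 0

lemma ksmulOn_monomial_excessPart_apply {k M : Type*} [Semiring k] [AddCommMonoid M]
    [Module k M] (hΔ : IsCoideal Δ) (α : MIdx p) (i : Fin p) (m : SeriesOn Δ M)
    (γ : {α // α ∈ Δ}) :
    ksmulOn hΔ (monomial (k := k) (Pi.single i (α i + 1))) (excessPart α i m) γ
      = if IsFirstExcess α γ i then m γ else 0 := by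
  rw [ksmulOn_monomial_apply, single_le_iff]
  by_cases hγ : α i + 1 ≤ (γ : MIdx p) i
  · have hcancel : (γ : MIdx p) - Pi.single i (α i + 1) + Pi.single i (α i + 1) = (γ : MIdx p) :=
      tsub_add_cancel_of_le (single_le_iff.mpr hγ)
    simp only [if_pos hγ, excessPart, hcancel, γ.2, true_and]
    rfl
  · rw [if_neg hγ, if_neg fun h => hγ h.1]

lemma eq_sum_ksmulOn_monomial_excessPart {k M : Type*} [Semiring k] [AddCommMonoid M]
    [Module k M] (hΔ : IsCoideal Δ) {α : MIdx p} {m : SeriesOn Δ M}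
    (hm : ∀ β : {α // α ∈ Δ}, (β : MIdx p) ≤ α → m β = 0) :
    m = ∑ i, ksmulOn hΔ (monomial (k := k) (Pi.single i (α i + 1))) (excessPart α i m) := by
  funext γ
  simp only [sum_apply, ksmulOn_monomial_excessPart_apply]
  by_cases hγ : (γ : MIdx p) ≤ α
  · simp [hm γ hγ]
  · obtain ⟨i, hi, huniq⟩ := existsUnique_isFirstExcess hγ
    rw [Finset.sum_eq_single i (fun j _ hj => if_neg (hj ∘ huniq j)) (by simp), if_pos hi]

end SeriesOn

section Locality

variable {Δ : Set (MIdx p)} {hΔ : IsCoideal Δ} {k E F : Type*} [Semiring k]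
  [AddCommGroup E] [Module k E] [AddCommGroup F] [Module k F] {f : SeriesOn Δ E → SeriesOn Δ F}

lemma map_zero_of_map_add (hadd : ∀ m m', f (m + m') = f m + f m') : f 0 = 0 := by
  funext γ
  have h := congrFun (hadd 0 0) γ
  rw [add_zero, SeriesOn.add_apply] at h
  exact left_eq_add.mp h

lemma map_sum_of_map_add (hadd : ∀ m m', f (m + m') = f m + f m') {ι : Type*} (s : Finset ι)
    (m : ι → SeriesOn Δ E) : f (∑ i ∈ s, m i) = ∑ i ∈ s, f (m i) := by
  induction s using Finset.cons_induction with
  | empty => exact map_zero_of_map_add hadd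
  | cons a s ha ih => rw [Finset.sum_cons, hadd, ih, Finset.sum_cons]

variable (hadd : ∀ m m', f (m + m') = f m + f m')
  (hlin : ∀ (c : SeriesOn Δ k) m, f (ksmulOn hΔ c m) = ksmulOn hΔ c (f m))
include hadd hlin

lemma apply_eq_zero_of_eqOn_Iic_zero {α : {α // α ∈ Δ}} {m : SeriesOn Δ E}
    (hm : ∀ β : {α // α ∈ Δ}, (β : MIdx p) ≤ α → m β = 0) : f m α = 0 := by
  rw [SeriesOn.eq_sum_ksmulOn_monomial_excessPart (k := k) hΔ hm, map_sum_of_map_add hadd,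
    SeriesOn.sum_apply]
  refine Finset.sum_eq_zero fun i _ => ?_
  rw [hlin, SeriesOn.ksmulOn_monomial_apply, if_neg (by simp [single_le_iff])]

lemma dependsOn_apply (α : {α // α ∈ Δ}) :
    DependsOn (fun m : SeriesOn Δ E => f m α) {β | (β : MIdx p) ≤ α} := by
  rintro (m : SeriesOn Δ E) (m' : SeriesOn Δ E) h
  show f m α = f m' α
  let d : SeriesOn Δ E := fun β => m β - m' β
  have hm : m = m' + d := funext fun β => (add_sub_cancel (m' β) (m β)).symm
  have hd : f d α = 0 :=
    apply_eq_zero_of_eqOn_Iic_zero hadd hlin fun β hβ => sub_eq_zero.mpr (h β hβ)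
  rw [hm, hadd, SeriesOn.add_apply, hd, add_zero]

lemma truncOn_map_congr {Δ' : Set (MIdx p)} (hΔ' : IsCoideal Δ') (hsub : Δ' ⊆ Δ)
    {m m' : SeriesOn Δ E} (h : truncOn hsub m = truncOn hsub m') :
    truncOn hsub (f m) = truncOn hsub (f m') :=
  funext fun α => dependsOn_apply hadd hlin _ fun β hβ => congrFun h ⟨β, hΔ'.2 α.2 hβ⟩

end Locality

lemma truncOn_surjective {Δ Δ' : Set (MIdx p)} (hsub : Δ' ⊆ Δ) {M : Type*} [Zero M] :
    Function.Surjective (truncOn hsub : SeriesOn Δ M → SeriesOn Δ' M) :=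
  fun m => ⟨fun β => if h : (β : MIdx p) ∈ Δ' then m ⟨β, h⟩ else 0, funext fun α => dif_pos α.2⟩

section Truncation

variable {Δ Δ' : Set (MIdx p)} {hΔ : IsCoideal Δ} {k E F : Type*} [Semiring k]
  [AddCommGroup E] [Module k E] [AddCommGroup F] [Module k F] {f : SeriesOn Δ E → SeriesOn Δ F}

lemma existsUnique_truncOn_comp_eq_comp_truncOn (hadd : ∀ m m', f (m + m') = f m + f m')
    (hlin : ∀ (c : SeriesOn Δ k) m, f (ksmulOn hΔ c m) = ksmulOn hΔ c (f m))
    (hΔ' : IsCoideal Δ') (hsub : Δ' ⊆ Δ) :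
    ∃! fbar : SeriesOn Δ' E → SeriesOn Δ' F,
      ((∀ m m', fbar (m + m') = fbar m + fbar m') ∧
        ∀ (c : SeriesOn Δ' k) m, fbar (ksmulOn hΔ' c m) = ksmulOn hΔ' c (fbar m)) ∧
      ∀ m, truncOn hsub (f m) = fbar (truncOn hsub m) := by
  have hfactors : (truncOn hsub ∘ f).FactorsThrough (truncOn hsub) :=
    fun _ _ h => truncOn_map_congr hadd hlin hΔ' hsub h
  set fbar := Function.extend (truncOn hsub) (truncOn hsub ∘ f) 0
  have hfbar (m : SeriesOn Δ E) : fbar (truncOn hsub m) = truncOn hsub (f m) :=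
    hfactors.extend_apply 0 m
  refine ⟨fbar, ⟨⟨?_, ?_⟩, fun m => (hfbar m).symm⟩, fun g hg => ?_⟩
  · intro m m'
    obtain ⟨m, rfl⟩ := truncOn_surjective hsub m
    obtain ⟨m', rfl⟩ := truncOn_surjective hsub m'
    change fbar (truncOn hsub (m + m')) = _
    rw [hfbar, hfbar, hfbar, hadd]
    rfl
  · intro c m
    obtain ⟨c, rfl⟩ := truncOn_surjective hsub c
    obtain ⟨m, rfl⟩ := truncOn_surjective hsub m
    change fbar (truncOn hsub (ksmulOn hΔ c m)) = _
    rw [hfbar, hfbar, hlin]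
    rfl
  · refine funext ((truncOn_surjective hsub).forall.mpr fun m => ?_)
    rw [hfbar, hg.2]

end Truncation

theorem stmt3_general (k E F : Type*) [CommRing k]
    [AddCommGroup E] [Module k E]
    [AddCommGroup F] [Module k F]
    (p : ℕ) (Δ Δ' : Set (MIdx p)) (hΔ : IsCoideal Δ) (hΔ' : IsCoideal Δ') (hsub : Δ' ⊆ Δ)
    (f : SeriesOn Δ E → SeriesOn Δ F)
    (hadd : ∀ m m' : SeriesOn Δ E, f (m + m') = f m + f m')
    (hlin : ∀ (c : SeriesOn Δ k) (m : SeriesOn Δ E), f (ksmulOn hΔ c m) = ksmulOn hΔ c (f m)) :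
    -- `f` is continuous for the product of the discrete topologies
    (@Continuous (SeriesOn Δ E) (SeriesOn Δ F)
        (@Pi.topologicalSpace _ (fun _ => E) (fun _ => ⊥))
        (@Pi.topologicalSpace _ (fun _ => F) (fun _ => ⊥)) f)
    -- `f (Δ'_E/Δ_E) ⊆ Δ'_F/Δ_F`
    ∧ (∀ m : SeriesOn Δ E, (∀ α : {α : MIdx p // α ∈ Δ}, (α : MIdx p) ∈ Δ' → m α = 0) →
        ∀ α : {α : MIdx p // α ∈ Δ}, (α : MIdx p) ∈ Δ' → f m α = 0)
    -- unique `k[[s]]_{Δ'}`-linear `f̄` commuting with the truncations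
    ∧ (∃! fbar : SeriesOn Δ' E → SeriesOn Δ' F,
        ((∀ m m' : SeriesOn Δ' E, fbar (m + m') = fbar m + fbar m')
          ∧ (∀ (c : SeriesOn Δ' k) (m : SeriesOn Δ' E),
              fbar (ksmulOn hΔ' c m) = ksmulOn hΔ' c (fbar m)))
        ∧ ∀ m : SeriesOn Δ E, truncOn hsub (f m) = fbar (truncOn hsub m)) := by
  refine ⟨?_, fun m hm α hα => ?_, existsUnique_truncOn_comp_eq_comp_truncOn hadd hlin hΔ' hsub⟩
  · let _ : TopologicalSpace E := ⊥
    let _ : TopologicalSpace F := ⊥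
    have _ : DiscreteTopology E := ⟨rfl⟩
    change @Continuous ({α // α ∈ Δ} → E) ({α // α ∈ Δ} → F) _ _ f
    refine continuous_pi fun α => continuous_of_dependsOn_of_finite (dependsOn_apply hadd hlin α) ?_
    exact (Set.finite_Iic (α : MIdx p)).preimage Subtype.val_injective.injOn
  · have hzero : truncOn hsub m = truncOn hsub 0 := funext fun β => hm _ β.2
    have hfm := congrFun (truncOn_map_congr hadd hlin hΔ' hsub hzero) ⟨α, hα⟩
    rwa [map_zero_of_map_add hadd] at hfm

/-- Every `k[[s]]_Δ`-linear map `f : E[[s]]_Δ → F[[s]]_Δ` is continuous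
for the product of discrete topologies, maps the submodule of classes of series whose
support is disjoint from `Δ'` into the corresponding submodule, and induces a unique
`k[[s]]_{Δ'}`-linear map `f̄ : E[[s]]_{Δ'} → F[[s]]_{Δ'}` commuting with the truncations. -/
theorem stmt3 (k A E F : Type*) [CommRing k] [CommRing A] [Algebra k A]
    [AddCommGroup E] [Module k E] [Module A E]
    [AddCommGroup F] [Module k F] [Module A F]
    (p : ℕ) (Δ Δ' : Set (MIdx p)) (hΔ : IsCoideal Δ) (hΔ' : IsCoideal Δ') (hsub : Δ' ⊆ Δ)
    (f : SeriesOn Δ E → SeriesOn Δ F)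
    (hadd : ∀ m m' : SeriesOn Δ E, f (m + m') = f m + f m')
    (hlin : ∀ (c : SeriesOn Δ k) (m : SeriesOn Δ E), f (ksmulOn hΔ c m) = ksmulOn hΔ c (f m)) :
    -- `f` is continuous for the product of the discrete topologies
    (@Continuous (SeriesOn Δ E) (SeriesOn Δ F)
        (@Pi.topologicalSpace _ (fun _ => E) (fun _ => ⊥))
        (@Pi.topologicalSpace _ (fun _ => F) (fun _ => ⊥)) f)
    -- `f (Δ'_E/Δ_E) ⊆ Δ'_F/Δ_F`
    ∧ (∀ m : SeriesOn Δ E, (∀ α : {α : MIdx p // α ∈ Δ}, (α : MIdx p) ∈ Δ' → m α = 0) →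
        ∀ α : {α : MIdx p // α ∈ Δ}, (α : MIdx p) ∈ Δ' → f m α = 0)
    -- unique `k[[s]]_{Δ'}`-linear `f̄` commuting with the truncations
    ∧ (∃! fbar : SeriesOn Δ' E → SeriesOn Δ' F,
        ((∀ m m' : SeriesOn Δ' E, fbar (m + m') = fbar m + fbar m')
          ∧ (∀ (c : SeriesOn Δ' k) (m : SeriesOn Δ' E),
              fbar (ksmulOn hΔ' c m) = ksmulOn hΔ' c (fbar m)))
        ∧ ∀ m : SeriesOn Δ E, truncOn hsub (f m) = fbar (truncOn hsub m)) :=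
  stmt3_general k E F p Δ Δ' hΔ hΔ' hsub f hadd hlin

end HS
end

section
/- Let k be a commutative ring, A a commutative k-algebra, and φ : A[[s]]_Δ → A[[t]]_∇ a substitution map, with φ(s_i) = Σ_{|β|>0} c^i_β t^β for i = 1,…,p. Let ψ : A[[s_1,…,s_p]] → A[[t]]_∇ be the continuous A-algebra homomorphism (substitution map from the full power series ring) determined by ψ(s_i) = Σ_{|β|=1} c^i_β t^β (the degree-1 homogeneous part of φ(s_i)). Then ψ vanishes on the ideal Δ_A of series supported outside Δ, and consequently there is a unique induced substitution map init φ : A[[s]]_Δ → A[[t]]_∇ satisfying (init φ)(s_i) = Σ_{|β|=1} c^i_β t^β for all i. -/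
open scoped Classical

namespace HS

/-- A substitution map `φ : A[[s]]_Δ → A[[t]]_∇`, modelled by the family of its
coefficients `C α e = C_e(φ,α)` (the coefficient of `t^e` in `φ(s^α)`):
it is multiplicative on monomials, unital, of order `≥ 1` (so `C α e = 0` for
`|e| < |α|`), kills the classes of monomials `s^α` with `α ∉ Δ`, and is
normalized to vanish outside `∇`. -/
structure SubstMap (A : Type*) [CommRing A] (p q : ℕ)
    (Δ : Set (MIdx p)) (nab : Set (MIdx q)) where
  C : MIdx p → MIdx q → A
  c_zero : ∀ e ∈ nab, C 0 e = if e = 0 then 1 else 0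
  c_mul : ∀ α ∈ Δ, ∀ β ∈ Δ, ∀ e ∈ nab,
    C (α + β) e = ∑ u ∈ Finset.Iic e, C α u * C β (e - u)
  c_ord : ∀ α ∈ Δ, ∀ e ∈ nab, wt e < wt α → C α e = 0
  c_suppL : ∀ α : MIdx p, α ∉ Δ → ∀ e : MIdx q, C α e = 0
  c_suppR : ∀ (α : MIdx p) (e : MIdx q), e ∉ nab → C α e = 0

variable {A' : Type*} [CommRing A'] {p' q' : ℕ} {Δ' : Set (MIdx p')} {nab' : Set (MIdx q')}

/-- the map `A[[s]]_Δ → A[[t]]_∇` induced by a substitution map -/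
def SubstMap.app (φ : SubstMap A' p' q' Δ' nab') (f : MIdx p' → A') : MIdx q' → A' :=
  fun e => ∑ α ∈ Finset.Iic (fun _ => wt e : MIdx p'), φ.C α e * f α

/-- `φ • D` for a series of `k`-linear endomorphisms of `A` -/
def SubstMap.bulletEnd {k : Type*} [CommRing k] [Algebra k A']
    (φ : SubstMap A' p' q' Δ' nab') (D : MIdx p' → Module.End k A') :
    MIdx q' → Module.End k A' :=
  fun e => ∑ α ∈ Finset.Iic (fun _ => wt e : MIdx p'), φ.C α e • D α

/-- `φ • r` for a series with coefficients in a `k`-algebra `S` over `A`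
(with structural map `ι : A → S`) -/
def SubstMap.bulletS {S : Type*} [Ring S] (ι : A' → S)
    (φ : SubstMap A' p' q' Δ' nab') (r : MIdx p' → S) : MIdx q' → S :=
  fun e => ∑ α ∈ Finset.Iic (fun _ => wt e : MIdx p'), ι (φ.C α e) * r α

/-- `r • φ` for a series with coefficients in a `k`-algebra `S` over `A` -/
def SubstMap.bulletSR {S : Type*} [Ring S] (ι : A' → S)
    (φ : SubstMap A' p' q' Δ' nab') (r : MIdx p' → S) : MIdx q' → S :=
  fun e => ∑ α ∈ Finset.Iic (fun _ => wt e : MIdx p'), r α * ι (φ.C α e)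

/-- `φ • m` for a series with coefficients in an `A`-module `M` -/
def SubstMap.bulletM {M : Type*} [AddCommMonoid M] [Module A' M]
    (φ : SubstMap A' p' q' Δ' nab') (m : MIdx p' → M) : MIdx q' → M :=
  fun e => ∑ α ∈ Finset.Iic (fun _ => wt e : MIdx p'), φ.C α e • m α

/-- `φ` has constant coefficients, i.e. all the `C_e(φ,α)` come from `k` -/
def SubstMap.HasConstCoeffs (k : Type*) [CommRing k] [Algebra k A']
    (φ : SubstMap A' p' q' Δ' nab') : Prop :=
  ∀ (α : MIdx p') (e : MIdx q'), φ.C α e ∈ Set.range (algebraMap k A')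

lemma wt_add' {p : ℕ} (a b : MIdx p) : wt (a + b) = wt a + wt b := by
  simp [wt, Finset.sum_add_distrib]

lemma wt_single' {p : ℕ} (i : Fin p) : wt (Pi.single i 1 : MIdx p) = 1 := by
  simp [wt, Pi.single_apply]

lemma wt_zero' {p : ℕ} : wt (0 : MIdx p) = 0 := by simp [wt]

lemma wt_eq_zero_iff' {p : ℕ} {α : MIdx p} : wt α = 0 ↔ α = 0 := by
  constructor
  · intro h
    funext i
    have := Finset.sum_eq_zero_iff.mp h i (Finset.mem_univ i)
    simpa using this
  · rintro rfl; exact wt_zero'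

lemma wt_sub_add' {p : ℕ} {u e : MIdx p} (h : u ≤ e) : wt u + wt (e - u) = wt e := by
  simp only [wt, ← Finset.sum_add_distrib]
  refine Finset.sum_congr rfl fun i _ => ?_
  have hle : u i ≤ e i := h i
  simp only [Pi.sub_apply]
  omega

lemma SubstMap.ext' {A : Type*} [CommRing A] {p q : ℕ} {Δ : Set (MIdx p)}
    {nab : Set (MIdx q)} {φ ψ : SubstMap A p q Δ nab} (h : φ.C = ψ.C) : φ = ψ := by
  cases φ; cases ψ; cases h; rfl

/-- key computation: `ψ.C α e` equals `φ.C α e` when `α ∈ Δ` and `wt e = wt α`,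
and vanishes otherwise (for `e ∈ ∇`). -/
lemma key_lemma {A : Type*} [CommRing A]
    {p q : ℕ} {Δ : Set (MIdx p)} {nab : Set (MIdx q)}
    (hΔ : IsCoideal Δ) (hnab : IsCoideal nab)
    (φ : SubstMap A p q Δ nab) (ψ : SubstMap A p q Set.univ nab)
    (hψ : ∀ i : Fin p, ∀ e ∈ nab,
      ψ.C (Pi.single i 1) e = if wt e = 1 then φ.C (Pi.single i 1) e else 0) :
    ∀ (α : MIdx p), ∀ e ∈ nab,
      ψ.C α e = if α ∈ Δ ∧ wt e = wt α then φ.C α e else 0 := by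
  have h0Δ : (0 : MIdx p) ∈ Δ := by
    obtain ⟨a, ha⟩ := hΔ.1
    exact hΔ.2 ha (fun i => Nat.zero_le _)
  have base : ∀ e ∈ nab, ψ.C 0 e = if (0 : MIdx p) ∈ Δ ∧ wt e = wt (0 : MIdx p)
      then φ.C 0 e else 0 := by
    intro e he
    rw [ψ.c_zero e he, φ.c_zero e he]
    by_cases h : e = 0
    · subst h; simp [h0Δ, wt_zero']
    · have : wt e ≠ 0 := fun hw => h (wt_eq_zero_iff'.mp hw)
      simp [h, wt_zero', this]
  suffices H : ∀ n : ℕ, ∀ α : MIdx p, wt α ≤ n → ∀ e ∈ nab,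
      ψ.C α e = if α ∈ Δ ∧ wt e = wt α then φ.C α e else 0 by
    intro α e he; exact H (wt α) α le_rfl e he
  intro n
  induction n with
  | zero =>
    intro α hα e he
    have : α = 0 := wt_eq_zero_iff'.mp (Nat.le_zero.mp hα)
    subst this
    exact base e he
  | succ n ih =>
    intro α hα e he
    by_cases hα0 : α = 0
    · subst hα0; exact base e he
    obtain ⟨i, hi⟩ : ∃ i, α i ≠ 0 := by
      by_contra h
      push_neg at h
      exact hα0 (funext fun i => h i)
    set α' : MIdx p := α - Pi.single i 1 with hα'def
    have hdec : Pi.single i 1 + α' = α := by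
      funext j
      simp only [hα'def, Pi.add_apply, Pi.sub_apply, Pi.single_apply]
      by_cases hj : j = i
      · simp only [if_pos hj]; subst hj; omega
      · simp only [if_neg hj]; omega
    have hα'le : α' ≤ α := fun j => by
      simp only [hα'def, Pi.sub_apply]; exact Nat.sub_le _ _
    have hsle : Pi.single i 1 ≤ α := fun j => by
      simp only [Pi.single_apply]
      by_cases hj : j = i
      · simp only [if_pos hj]; subst hj; omega
      · simp [hj]
    have hwtα : wt α = wt α' + 1 := by
      rw [← hdec, wt_add', wt_single']; omega
    have hα'wt : wt α' ≤ n := by omega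
    -- the multiplicativity of ψ
    have hmul := ψ.c_mul (Pi.single i 1) (Set.mem_univ _) α' (Set.mem_univ _) e he
    rw [hdec] at hmul
    have humem : ∀ u ∈ Finset.Iic e, u ∈ nab ∧ e - u ∈ nab := fun u hu => by
      have hule : u ≤ e := Finset.mem_Iic.mp hu
      exact ⟨hnab.2 he hule, hnab.2 he (fun j => Nat.sub_le _ _)⟩
    have hterm : ∀ u ∈ Finset.Iic e,
        ψ.C (Pi.single i 1) u * ψ.C α' (e - u)
        = (if wt u = 1 then φ.C (Pi.single i 1) u else 0)
          * (if α' ∈ Δ ∧ wt (e - u) = wt α' then φ.C α' (e - u) else 0) := by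
      intro u hu
      obtain ⟨hu1, hu2⟩ := humem u hu
      rw [hψ i u hu1, ih α' hα'wt (e - u) hu2]
    rw [Finset.sum_congr rfl hterm] at hmul
    by_cases hα'Δ : α' ∈ Δ
    · by_cases hsΔ : Pi.single i 1 ∈ Δ
      · by_cases hwe : wt e = wt α
        · -- main case: ψ.C α e = φ.C α e
          have hsum : ∀ u ∈ Finset.Iic e,
              (if wt u = 1 then φ.C (Pi.single i 1) u else 0)
              * (if α' ∈ Δ ∧ wt (e - u) = wt α' then φ.C α' (e - u) else 0)
              = φ.C (Pi.single i 1) u * φ.C α' (e - u) := by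
            intro u hu
            obtain ⟨hu1, hu2⟩ := humem u hu
            have hadd := wt_sub_add' (Finset.mem_Iic.mp hu)
            by_cases h1 : wt u = 1
            · have h2 : wt (e - u) = wt α' := by omega
              rw [if_pos h1, if_pos ⟨hα'Δ, h2⟩]
            · rw [if_neg h1]
              rcases Nat.lt_or_ge (wt u) 1 with hlt | hge
              · have hu0 : u = 0 := wt_eq_zero_iff'.mp (by omega)
                have hz : φ.C (Pi.single i 1) u = 0 := by
                  subst hu0
                  exact φ.c_ord _ hsΔ 0 hu1 (by rw [wt_zero', wt_single']; omega)
                simp [hz]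
              · have h2 : wt (e - u) < wt α' := by omega
                simp [φ.c_ord α' hα'Δ (e - u) hu2 h2]
          rw [Finset.sum_congr rfl hsum] at hmul
          have hφmul := φ.c_mul (Pi.single i 1) hsΔ α' hα'Δ e he
          rw [hdec] at hφmul
          rw [← hφmul] at hmul
          by_cases hαΔ : α ∈ Δ
          · rw [if_pos ⟨hαΔ, hwe⟩]; exact hmul
          · rw [if_neg (by tauto), hmul, φ.c_suppL α hαΔ e]
        · -- wt e ≠ wt α: everything vanishes
          rw [if_neg (by tauto)]
          rw [hmul]
          apply Finset.sum_eq_zero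
          intro u hu
          have hadd := wt_sub_add' (Finset.mem_Iic.mp hu)
          by_cases h1 : wt u = 1
          · have h2 : ¬ (α' ∈ Δ ∧ wt (e - u) = wt α') := by
              rintro ⟨-, h2⟩; omega
            rw [if_neg h2, mul_zero]
          · rw [if_neg h1, zero_mul]
      · -- single i 1 ∉ Δ, so α ∉ Δ and φ.C (single i 1) _ = 0
        have hαΔ : α ∉ Δ := fun h => hsΔ (hΔ.2 h hsle)
        rw [if_neg (by tauto)]
        rw [hmul]
        apply Finset.sum_eq_zero
        intro u hu
        simp [φ.c_suppL _ hsΔ u]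
    · -- α' ∉ Δ, so α ∉ Δ and the second factor is always 0
      have hαΔ : α ∉ Δ := fun h => hα'Δ (hΔ.2 h hα'le)
      rw [if_neg (by tauto)]
      rw [hmul]
      apply Finset.sum_eq_zero
      intro u hu
      rw [if_neg (fun h : α' ∈ Δ ∧ wt (e - u) = wt α' => hα'Δ h.1), mul_zero]

/-- Let `φ : A[[s]]_Δ → A[[t]]_∇` be a substitution map and let
`ψ : A[[s]] → A[[t]]_∇` be the substitution map on the full power series ring
(co-ideal `Set.univ`) determined by sending each `s_i` to the degree-`1` homogeneous
part of `φ(s_i)`.  Then `ψ` vanishes on the ideal `Δ_A` of (classes of) series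
supported outside `Δ`, and there is a unique induced substitution map
`init φ : A[[s]]_Δ → A[[t]]_∇` (unique substitution map agreeing with `ψ` on `Δ`). -/
theorem stmt4 (k A : Type*) [CommRing k] [CommRing A] [Algebra k A]
    (p q : ℕ) (Δ : Set (MIdx p)) (nab : Set (MIdx q))
    (hΔ : IsCoideal Δ) (hnab : IsCoideal nab)
    (φ : SubstMap A p q Δ nab)
    (ψ : SubstMap A p q Set.univ nab)
    (hψ : ∀ i : Fin p, ∀ e ∈ nab,
      ψ.C (Pi.single i 1) e = if wt e = 1 then φ.C (Pi.single i 1) e else 0) :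
    (∀ f : MIdx p → A, (∀ α ∈ Δ, f α = 0) → ∀ e ∈ nab, ψ.app f e = 0)
    ∧ (∃! χ : SubstMap A p q Δ nab, ∀ α ∈ Δ, ∀ e ∈ nab, χ.C α e = ψ.C α e) := by
  have key := key_lemma hΔ hnab φ ψ hψ
  have h0Δ : (0 : MIdx p) ∈ Δ := by
    obtain ⟨a, ha⟩ := hΔ.1
    exact hΔ.2 ha (fun i => Nat.zero_le _)
  constructor
  · -- ψ vanishes on Δ_A
    intro f hf e he
    apply Finset.sum_eq_zero
    intro α hα
    by_cases hαΔ : α ∈ Δ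
    · rw [hf α hαΔ, mul_zero]
    · rw [key α e he, if_neg (by tauto), zero_mul]
  · -- existence and uniqueness of init φ
    refine ⟨⟨fun α e => if α ∈ Δ then ψ.C α e else 0, ?_, ?_, ?_, ?_, ?_⟩, ?_, ?_⟩
    · -- c_zero
      intro e he
      beta_reduce
      rw [if_pos h0Δ, ψ.c_zero e he]
    · -- c_mul
      intro α hα β hβ e he
      have hrhs : ∀ u ∈ Finset.Iic e,
          (if α ∈ Δ then ψ.C α u else 0) * (if β ∈ Δ then ψ.C β (e - u) else 0)
          = ψ.C α u * ψ.C β (e - u) := by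
        intro u _
        rw [if_pos hα, if_pos hβ]
      rw [Finset.sum_congr rfl hrhs,
        ← ψ.c_mul α (Set.mem_univ _) β (Set.mem_univ _) e he]
      beta_reduce
      by_cases hab : α + β ∈ Δ
      · rw [if_pos hab]
      · rw [if_neg hab, key (α + β) e he, if_neg (by tauto)]
    · -- c_ord
      intro α hα e he hlt
      beta_reduce
      rw [if_pos hα, key α e he, if_neg (by rintro ⟨-, h⟩; omega)]
    · -- c_suppL
      intro α hα e
      beta_reduce
      rw [if_neg hα]
    · -- c_suppR
      intro α e he
      beta_reduce
      by_cases hα : α ∈ Δ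
      · rw [if_pos hα, ψ.c_suppR α e he]
      · rw [if_neg hα]
    · -- the induced map agrees with ψ on Δ
      intro α hα e he
      simp only [if_pos hα]
    · -- uniqueness
      intro χ' hχ'
      apply SubstMap.ext'
      funext α e
      simp only
      by_cases hα : α ∈ Δ
      · rw [if_pos hα]
        by_cases he : e ∈ nab
        · exact hχ' α hα e he
        · rw [χ'.c_suppR α e he, ψ.c_suppR α e he]
      · rw [if_neg hα, χ'.c_suppL α hα e]

end HS
end

section
/- Let k be a commutative ring, A a commutative k-algebra, p ∈ ℕ and Δ ⊆ ℕ^p a nonempty co-ideal. For every D ∈ HS^p_k(A;Δ) and every α ∈ Δ, the k-linear endomorphism D_α of A is a differential operator of order ≤ ⌊|α|/ℓ_α(D)⌋, where the bound is read as 0 when ℓ_α(D) = ∞. -/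
open scoped Classical

namespace HS

/-- `P` is a `k`-linear differential operator of `A` of order `≤ n` -/
def IsDiffOpOfOrder (k A : Type*) [CommRing k] [CommRing A] [Algebra k A] :
    ℕ → Module.End k A → Prop
  | 0, P => ∀ a x : A, P (a * x) = a * P x
  | n + 1, P => ∀ a : A, IsDiffOpOfOrder k A n
      (P * LinearMap.mulLeft k a - LinearMap.mulLeft k a * P)

/-- `ℓ_α(D) = min{ |β| : β ∈ Δ, β ≤ α, β ≠ 0, D_β ≠ 0 }`, with the convention
`Nat.sInf ∅ = 0` standing for `ℓ_α(D) = ∞` (note `wt α / 0 = 0` in `ℕ`, matching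
the convention that the bound `⌊|α|/ℓ_α(D)⌋` is `0` when `ℓ_α(D) = ∞`). -/
noncomputable def ellAt {k A : Type*} [CommRing k] [CommRing A] [Algebra k A] {p : ℕ}
    (Δ : Set (MIdx p)) (D : MIdx p → Module.End k A) (α : MIdx p) : ℕ :=
  sInf {n : ℕ | ∃ β ∈ Δ, β ≤ α ∧ β ≠ 0 ∧ D β ≠ 0 ∧ wt β = n}

/-! The commutator identity `[D_α, a] = ∑_{0 ≠ β ≤ α} D_β(a) D_{α-β}` lowers the weight of the
index in every term with `D_β ≠ 0` by at least `ℓ_α(D)`, so `⌊|α|/ℓ_α(D)⌋` successive commutators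
with multiplication operators kill `D_α`. When `ℓ_α(D) = ∞` the sum is empty and `D_α` is
`A`-linear. -/

namespace IsDiffOpOfOrder

variable {k A : Type*} [CommRing k] [CommRing A] [Algebra k A]

theorem zero : ∀ n, IsDiffOpOfOrder k A n 0
  | 0 => fun a x => by simp
  | n + 1 => fun _ => by simpa using zero n

theorem add : ∀ {n} {P Q : Module.End k A}, IsDiffOpOfOrder k A n P →
    IsDiffOpOfOrder k A n Q → IsDiffOpOfOrder k A n (P + Q)
  | 0, P, Q, hP, hQ => fun a x => by
      simp only [LinearMap.add_apply, hP a x, hQ a x, mul_add]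
  | n + 1, P, Q, hP, hQ => fun a => by
      have : (P + Q) * LinearMap.mulLeft k a - LinearMap.mulLeft k a * (P + Q)
          = (P * LinearMap.mulLeft k a - LinearMap.mulLeft k a * P)
            + (Q * LinearMap.mulLeft k a - LinearMap.mulLeft k a * Q) := by
        noncomm_ring
      rw [this]
      exact add (hP a) (hQ a)

theorem sum {ι : Type*} {s : Finset ι} {f : ι → Module.End k A} {n : ℕ}
    (h : ∀ i ∈ s, IsDiffOpOfOrder k A n (f i)) : IsDiffOpOfOrder k A n (∑ i ∈ s, f i) :=
  Finset.sum_induction f _ (fun _ _ => add) (zero n) h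

theorem mulLeft_mul : ∀ {n} (b : A) {Q : Module.End k A}, IsDiffOpOfOrder k A n Q →
    IsDiffOpOfOrder k A n (LinearMap.mulLeft k b * Q)
  | 0, b, Q, hQ => fun a x => by
      simp only [Module.End.mul_apply, LinearMap.mulLeft_apply, hQ a x]
      ring
  | n + 1, b, Q, hQ => fun a => by
      have hba : LinearMap.mulLeft k a * LinearMap.mulLeft k b
          = LinearMap.mulLeft k b * LinearMap.mulLeft k a := by
        ext x
        simp [mul_left_comm]
      have : LinearMap.mulLeft k b * Q * LinearMap.mulLeft k a
            - LinearMap.mulLeft k a * (LinearMap.mulLeft k b * Q)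
          = LinearMap.mulLeft k b * (Q * LinearMap.mulLeft k a - LinearMap.mulLeft k a * Q) := by
        rw [mul_sub, mul_assoc, ← mul_assoc (LinearMap.mulLeft k a), hba, mul_assoc]
      rw [this]
      exact mulLeft_mul b (hQ a)

theorem succ : ∀ {n} {P : Module.End k A}, IsDiffOpOfOrder k A n P →
    IsDiffOpOfOrder k A (n + 1) P
  | 0, P, hP => fun a => by
      have : P * LinearMap.mulLeft k a - LinearMap.mulLeft k a * P = 0 := by
        ext x
        simp [hP a x]
      rw [this]
      exact zero 0
  | _ + 1, _, hP => fun a => succ (hP a)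

theorem mono {n m : ℕ} (h : n ≤ m) {P : Module.End k A} (hP : IsDiffOpOfOrder k A n P) :
    IsDiffOpOfOrder k A m P :=
  Nat.le_induction hP (fun _ _ => succ) m h

theorem of_commutator_eq_zero {P : Module.End k A}
    (h : ∀ a, P * LinearMap.mulLeft k a - LinearMap.mulLeft k a * P = 0) :
    IsDiffOpOfOrder k A 0 P := fun a x => by
  simpa [sub_eq_zero] using LinearMap.congr_fun (h a) x

end IsDiffOpOfOrder

section Weight

variable {p : ℕ}

theorem wt_add_wt_sub {α β : MIdx p} (h : β ≤ α) : wt β + wt (α - β) = wt α := by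
  simp only [wt, ← Finset.sum_add_distrib]
  exact Finset.sum_congr rfl fun i _ => Nat.add_sub_cancel' (h i)

theorem wt_pos {β : MIdx p} (h : β ≠ 0) : 0 < wt β := by
  contrapose! h
  funext i
  exact Finset.sum_eq_zero_iff.mp (Nat.le_zero.mp h) i (Finset.mem_univ i)

end Weight

section HasseSchmidt

variable {k A : Type*} [CommRing k] [CommRing A] [Algebra k A] {p : ℕ}
  {Δ : Set (MIdx p)} {D : MIdx p → Module.End k A}

theorem ellAt_pos {α β : MIdx p} (hβΔ : β ∈ Δ) (hβα : β ≤ α) (hβ0 : β ≠ 0) (hDβ : D β ≠ 0) :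
    0 < ellAt Δ D α := by
  obtain ⟨γ, -, -, hγ0, -, hγ⟩ := Nat.sInf_mem (s := {n : ℕ | ∃ β ∈ Δ, β ≤ α ∧ β ≠ 0 ∧
    D β ≠ 0 ∧ wt β = n}) ⟨_, β, hβΔ, hβα, hβ0, hDβ, rfl⟩
  rw [ellAt, ← hγ]
  exact wt_pos hγ0

theorem ellAt_le_wt {α β : MIdx p} (hβΔ : β ∈ Δ) (hβα : β ≤ α) (hβ0 : β ≠ 0) (hDβ : D β ≠ 0) :
    ellAt Δ D α ≤ wt β :=
  Nat.sInf_le ⟨β, hβΔ, hβα, hβ0, hDβ, rfl⟩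

theorem IsHS.commutator_eq (hD : IsHS k A Δ D) {α : MIdx p} (hα : α ∈ Δ) (a : A) :
    D α * LinearMap.mulLeft k a - LinearMap.mulLeft k a * D α
      = ∑ β ∈ (Finset.Iic α).erase 0, LinearMap.mulLeft k (D β a) * D (α - β) := by
  ext x
  have h0 : (0 : MIdx p) ∈ Finset.Iic α := Finset.mem_Iic.mpr bot_le
  simp only [LinearMap.sub_apply, Module.End.mul_apply, LinearMap.mulLeft_apply,
    hD.2 α hα a x, ← Finset.add_sum_erase _ _ h0, hD.1, tsub_zero, Module.End.one_apply,
    add_sub_cancel_left, LinearMap.coe_sum, Finset.sum_apply]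

theorem IsHS.isDiffOpOfOrder_wt_div (hΔ : IsCoideal Δ) (hD : IsHS k A Δ D) {ℓ : ℕ}
    (hℓ : 0 < ℓ) (α : MIdx p) (hα : α ∈ Δ)
    (hℓα : ∀ β ≤ α, β ≠ 0 → D β ≠ 0 → ℓ ≤ wt β) :
    IsDiffOpOfOrder k A (wt α / ℓ) (D α) := by
  induction α using (measure wt).wf.induction with
  | _ α ih =>
  have hterm : ∀ β ∈ (Finset.Iic α).erase 0, D β ≠ 0 →
      0 < wt α / ℓ ∧ IsDiffOpOfOrder k A (wt α / ℓ - 1) (D (α - β)) := by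
    intro β hβ hDβ
    have hβα : β ≤ α := Finset.mem_Iic.mp (Finset.mem_of_mem_erase hβ)
    have hℓβ : ℓ ≤ wt β := hℓα β hβα (Finset.ne_of_mem_erase hβ) hDβ
    have hwt := wt_add_wt_sub hβα
    have hsub : IsDiffOpOfOrder k A (wt (α - β) / ℓ) (D (α - β)) :=
      ih (α - β) (by change wt (α - β) < wt α; omega) (hΔ.2 hα tsub_le_self)
        fun γ hγ => hℓα γ (hγ.trans tsub_le_self)
    have hdiv : wt (α - β) / ℓ + 1 ≤ wt α / ℓ := by
      rw [← Nat.add_div_right _ hℓ]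
      exact Nat.div_le_div_right (by omega)
    exact ⟨(Nat.succ_pos _).trans_le hdiv, hsub.mono (Nat.le_sub_one_of_lt hdiv)⟩
  rcases hn : wt α / ℓ with _ | n
  · refine IsDiffOpOfOrder.of_commutator_eq_zero fun a => ?_
    rw [hD.commutator_eq hα]
    refine Finset.sum_eq_zero fun β hβ => ?_
    by_cases hDβ : D β = 0
    · simp [hDβ]
    · exact absurd (hterm β hβ hDβ).1 (by omega)
  · intro a
    rw [hD.commutator_eq hα]
    refine IsDiffOpOfOrder.sum fun β hβ => ?_
    by_cases hDβ : D β = 0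
    · simpa [hDβ] using IsDiffOpOfOrder.zero n
    · simpa [hn] using (hterm β hβ hDβ).2.mulLeft_mul (D β a)

end HasseSchmidt

/-- For every `(p,Δ)`-variate Hasse–Schmidt derivation `D` and every
`α ∈ Δ`, the component `D_α` is a differential operator of order `≤ ⌊|α|/ℓ_α(D)⌋`. -/
theorem stmt5 (k A : Type*) [CommRing k] [CommRing A] [Algebra k A]
    (p : ℕ) (Δ : Set (MIdx p)) (hΔ : IsCoideal Δ)
    (D : MIdx p → Module.End k A) (hD : IsHS k A Δ D) :
    ∀ α ∈ Δ, IsDiffOpOfOrder k A (wt α / ellAt Δ D α) (D α) := by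
  intro α hα
  rcases (ellAt Δ D α).eq_zero_or_pos with hℓ | hℓ
  · -- no nonzero `D_β` lies below `α`, so `ℓ = |α| + 1` is admissible and also gives order `0`
    rw [hℓ, Nat.div_zero, ← Nat.div_eq_of_lt (Nat.lt_succ_self (wt α))]
    exact hD.isDiffOpOfOrder_wt_div hΔ (Nat.succ_pos _) α hα
      fun β hβα hβ0 hDβ => absurd (ellAt_pos (hΔ.2 hα hβα) hβα hβ0 hDβ) hℓ.not_gt
  · exact hD.isDiffOpOfOrder_wt_div hΔ hℓ α hα
      fun β hβα hβ0 hDβ => ellAt_le_wt (hΔ.2 hα hβα) hβα hβ0 hDβ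

end HS
end

section
/- Let k be a commutative ring and A a commutative k-algebra. For every substitution map φ : A[[s]]_Δ → A[[t]]_∇ and every D ∈ HS^p_k(A;Δ), the series φ•D lies in HS^q_k(A;∇), and moreover Φ_{φ•D} = φ ∘ Φ_D as maps A → A[[t]]_∇. -/
open scoped Classical

namespace HS

variable {A' : Type*} [CommRing A'] {p' q' : ℕ} {Δ' : Set (MIdx p')} {nab' : Set (MIdx q')}

lemma wt_mono {p : ℕ} {α β : MIdx p} (h : α ≤ β) : wt α ≤ wt β :=
  Finset.sum_le_sum fun i _ => h i

lemma coord_le_wt {p : ℕ} (α : MIdx p) (i : Fin p) : α i ≤ wt α :=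
  Finset.single_le_sum (fun _ _ => Nat.zero_le _) (Finset.mem_univ i)

lemma SubstMap.c_vanish {A : Type*} [CommRing A] {p q : ℕ} {Δ : Set (MIdx p)}
    {nab : Set (MIdx q)} (φ : SubstMap A p q Δ nab) {δ : MIdx p} {e : MIdx q}
    (he : e ∈ nab) (h : wt e < wt δ) : φ.C δ e = 0 := by
  by_cases hδ : δ ∈ Δ
  · exact φ.c_ord δ hδ e he h
  · exact φ.c_suppL δ hδ e

lemma bullet_eval {k A : Type*} [CommRing k] [CommRing A] [Algebra k A]
    {p q : ℕ} {Δ : Set (MIdx p)} {nab : Set (MIdx q)}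
    (φ : SubstMap A p q Δ nab) (D : MIdx p → Module.End k A)
    {u : MIdx q} (hu : u ∈ nab) {n : ℕ} (hn : wt u ≤ n) (z : A) :
    φ.bulletEnd D u z = ∑ β ∈ Finset.Iic (fun _ => n : MIdx p), φ.C β u * D β z := by
  have h1 : φ.bulletEnd D u z
      = ∑ β ∈ Finset.Iic (fun _ => wt u : MIdx p), φ.C β u * D β z := by
    simp [SubstMap.bulletEnd, LinearMap.sum_apply, smul_eq_mul]
  rw [h1]
  refine Finset.sum_subset (Finset.Iic_subset_Iic.mpr fun i => hn) ?_
  intro β _ hβ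
  have : ¬ β ≤ (fun _ => wt u : MIdx p) := fun h => hβ (Finset.mem_Iic.mpr h)
  obtain ⟨i, hi⟩ := not_forall.mp this
  have : wt u < wt β := lt_of_lt_of_le (Nat.lt_of_not_le hi) (coord_le_wt β i)
  rw [φ.c_vanish hu this, zero_mul]

/-- For every substitution map `φ : A[[s]]_Δ → A[[t]]_∇` and every
`D ∈ HS^p_k(A;Δ)`, the series `φ•D` is a `(q,∇)`-variate Hasse–Schmidt derivation,
and `Φ_{φ•D} = φ ∘ Φ_D` as maps `A → A[[t]]_∇`. -/
theorem stmt7 (k A : Type*) [CommRing k] [CommRing A] [Algebra k A]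
    (p q : ℕ) (Δ : Set (MIdx p)) (nab : Set (MIdx q))
    (hΔ : IsCoideal Δ) (hnab : IsCoideal nab)
    (φ : SubstMap A p q Δ nab)
    (D : MIdx p → Module.End k A) (hD : IsHS k A Δ D) :
    IsHS k A nab (φ.bulletEnd D)
    ∧ (∀ a : A, ∀ e ∈ nab, φ.bulletEnd D e a = φ.app (fun α => D α a) e) := by
  have h0nab : (0 : MIdx q) ∈ nab := by
    obtain ⟨α, hα⟩ := hnab.1
    exact hnab.2 hα (fun i => Nat.zero_le _)
  constructor
  · constructor
    · -- D_0 = 1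
      have hwt0 : wt (0 : MIdx q) = 0 := by simp [wt]
      have hIic : Finset.Iic (fun _ => wt (0 : MIdx q) : MIdx p) = {0} := by
        ext β
        simp only [Finset.mem_Iic, Finset.mem_singleton, hwt0]
        constructor
        · intro h; funext i; exact Nat.le_zero.mp (h i)
        · intro h; subst h; exact le_refl _
      have hC00 : φ.C 0 0 = 1 := by
        rw [φ.c_zero 0 h0nab]; simp
      rw [show (0 : MIdx q) = 0 from rfl]
      unfold SubstMap.bulletEnd
      rw [hIic, Finset.sum_singleton, hC00, hD.1, one_smul]
    · -- Leibniz
      intro e he x y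
      set E : MIdx p := (fun _ => wt e) with hE
      have hwtE : ∀ {β : MIdx p}, β ∈ Finset.Iic E → wt β ≤ wt e → True := fun _ _ => trivial
      -- common target sum
      have key : ∀ β γ : MIdx p,
          (∑ u ∈ Finset.Iic e, φ.C β u * φ.C γ (e - u)) = φ.C (β + γ) e := by
        intro β γ
        by_cases hβ : β ∈ Δ
        · by_cases hγ : γ ∈ Δ
          · exact (φ.c_mul β hβ γ hγ e he).symm
          · have hbg : β + γ ∉ Δ := fun h => hγ (hΔ.2 h le_add_self)
            rw [φ.c_suppL _ hbg]
            exact Finset.sum_eq_zero fun u _ => by rw [φ.c_suppL γ hγ, mul_zero]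
        · have hbg : β + γ ∉ Δ := fun h => hβ (hΔ.2 h le_self_add)
          rw [φ.c_suppL _ hbg]
          exact Finset.sum_eq_zero fun u _ => by rw [φ.c_suppL β hβ, zero_mul]
      -- RHS computation
      have hRHS : (∑ u ∈ Finset.Iic e, φ.bulletEnd D u x * φ.bulletEnd D (e - u) y)
          = ∑ β ∈ Finset.Iic E, ∑ γ ∈ Finset.Iic E,
              φ.C (β + γ) e * (D β x * D γ y) := by
        have step : ∀ u ∈ Finset.Iic e,
            φ.bulletEnd D u x * φ.bulletEnd D (e - u) y
            = ∑ β ∈ Finset.Iic E, ∑ γ ∈ Finset.Iic E,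
                (φ.C β u * φ.C γ (e - u)) * (D β x * D γ y) := by
          intro u hu
          have hu' : u ∈ nab := hnab.2 he (Finset.mem_Iic.mp hu)
          have heu : e - u ∈ nab := hnab.2 he (fun i => Nat.sub_le _ _)
          rw [bullet_eval φ D hu' (wt_mono (Finset.mem_Iic.mp hu)) x,
              bullet_eval φ D heu (wt_mono (fun i => Nat.sub_le _ _)) y,
              Finset.sum_mul_sum]
          refine Finset.sum_congr rfl fun β _ => Finset.sum_congr rfl fun γ _ => ?_
          ring
        rw [Finset.sum_congr rfl step, Finset.sum_comm]
        refine Finset.sum_congr rfl fun β _ => ?_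
        rw [Finset.sum_comm]
        refine Finset.sum_congr rfl fun γ _ => ?_
        rw [← Finset.sum_mul, key]
      rw [hRHS]
      -- LHS computation
      have hLHS : φ.bulletEnd D e (x * y)
          = ∑ α ∈ Finset.Iic E, ∑ β ∈ Finset.Iic α,
              φ.C α e * (D β x * D (α - β) y) := by
        rw [bullet_eval φ D he (le_refl _) (x * y)]
        refine Finset.sum_congr rfl fun α _ => ?_
        by_cases hα : α ∈ Δ
        · rw [hD.2 α hα x y, Finset.mul_sum]
        · simp [φ.c_suppL α hα]
      rw [hLHS]
      -- reindex LHS as a sum over pairs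
      rw [Finset.sum_sigma']
      -- restrict RHS to the pairs with β + γ ≤ E
      rw [← Finset.sum_product']
      have hfilter : (∑ z ∈ Finset.Iic E ×ˢ Finset.Iic E,
            φ.C (z.1 + z.2) e * (D z.1 x * D z.2 y))
          = ∑ z ∈ (Finset.Iic E ×ˢ Finset.Iic E).filter (fun z => z.1 + z.2 ≤ E),
            φ.C (z.1 + z.2) e * (D z.1 x * D z.2 y) := by
        symm
        refine Finset.sum_filter_of_ne ?_
        intro z _ hz
        by_contra hle
        obtain ⟨i, hi⟩ := not_forall.mp hle
        have hlt : wt e < wt (z.1 + z.2) :=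
          lt_of_lt_of_le (Nat.lt_of_not_le hi) (coord_le_wt _ i)
        rw [φ.c_vanish he hlt, zero_mul] at hz
        exact hz rfl
      rw [hfilter]
      -- bijection between the two index sets
      refine Finset.sum_nbij' (i := fun z => (z.2, z.1 - z.2))
        (j := fun z => ⟨z.1 + z.2, z.1⟩) ?_ ?_ ?_ ?_ ?_
      · rintro ⟨α, β⟩ hz
        simp only [Finset.mem_sigma, Finset.mem_Iic] at hz
        obtain ⟨h1, h2⟩ := hz
        simp only [Finset.mem_filter, Finset.mem_product, Finset.mem_Iic]
        refine ⟨⟨le_trans h2 h1, le_trans (fun i => Nat.sub_le _ _) h1⟩, ?_⟩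
        have : β + (α - β) = α := funext fun i => Nat.add_sub_cancel' (h2 i)
        rw [this]; exact h1
      · rintro ⟨β, γ⟩ hz
        simp only [Finset.mem_filter, Finset.mem_product, Finset.mem_Iic] at hz
        simp only [Finset.mem_sigma, Finset.mem_Iic]
        exact ⟨hz.2, le_self_add⟩
      · rintro ⟨α, β⟩ hz
        simp only [Finset.mem_sigma, Finset.mem_Iic] at hz
        have : β + (α - β) = α := funext fun i => Nat.add_sub_cancel' (hz.2 i)
        simp [this]
      · rintro ⟨β, γ⟩ _
        have : β + γ - β = γ := funext fun i => Nat.add_sub_cancel_left _ _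
        simp [this]
      · rintro ⟨α, β⟩ hz
        simp only [Finset.mem_sigma, Finset.mem_Iic] at hz
        have : β + (α - β) = α := funext fun i => Nat.add_sub_cancel' (hz.2 i)
        simp [this]
  · intro a e _
    simp [SubstMap.bulletEnd, SubstMap.app, LinearMap.sum_apply, smul_eq_mul]

end HS
end

section
/- Let k be a commutative ring and A a commutative k-algebra. For every m (a positive integer or m = ∞), the set Ider_k(A;m) of m-integrable k-derivations of A is an A-submodule of Der_k(A): it contains 0, and it is closed under addition and under multiplication by elements of A. -/
/-!
Integrable derivations inherit the operations of Hasse–Schmidt derivations: the trivial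
family `(1, 0, 0, …)` integrates `0`; the composition `(D ∘ E)_i = ∑_{j+l=i} D_j ∘ E_l`
of two Hasse–Schmidt derivations is again one, with first component `D_1 + E_1`; and
`a • D` integrates `a • D_1`.
-/

namespace HS

/-- A Hasse–Schmidt derivation of `A` over `k` of length `m` (`m : ℕ∞`, with
`m = ⊤` for length `∞`): a family `D = (D_i)` of `k`-linear endomorphisms with
`D_0 = id` and `D_i(xy) = ∑_{j+l=i} D_j(x) D_l(y)` for all `i ≤ m`. -/
def IsHS1 (k A : Type*) [CommRing k] [CommRing A] [Algebra k A]
    (m : ℕ∞) (D : ℕ → Module.End k A) : Prop :=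
  D 0 = 1 ∧ ∀ i : ℕ, (i : ℕ∞) ≤ m → ∀ x y : A,
    D i (x * y) = ∑ j ∈ Finset.range (i + 1), D j x * D (i - j) y

/-- `δ` is an `m`-integrable `k`-derivation of `A`. -/
def IsIntegrable (k A : Type*) [CommRing k] [CommRing A] [Algebra k A]
    (m : ℕ∞) (δ : Derivation k A A) : Prop :=
  ∃ D : ℕ → Module.End k A, IsHS1 k A m D ∧ D 1 = δ.toLinearMap

open Finset

/- Both sides sum `f p l q r` over the quadruples of total weight `i`, grouped by
`(p + q, l + r)` on the left and by `(p + l, q + r)` on the right. -/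
theorem sum_antidiagonal_antidiagonal_comm {M : Type*} [AddCommMonoid M] (i : ℕ)
    (f : ℕ → ℕ → ℕ → ℕ → M) :
    ∑ jw ∈ antidiagonal i, ∑ lr ∈ antidiagonal jw.2, ∑ pq ∈ antidiagonal jw.1,
      f pq.1 lr.1 pq.2 lr.2
    = ∑ st ∈ antidiagonal i, ∑ pl ∈ antidiagonal st.1, ∑ qr ∈ antidiagonal st.2,
      f pl.1 pl.2 qr.1 qr.2 := by
  simp only [← sum_product']
  rw [sum_sigma', sum_sigma']
  refine sum_nbij'
    (fun x => ⟨(x.2.2.1 + x.2.1.1, x.2.2.2 + x.2.1.2), ((x.2.2.1, x.2.1.1), (x.2.2.2, x.2.1.2))⟩)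
    (fun x => ⟨(x.2.1.1 + x.2.2.1, x.2.1.2 + x.2.2.2), ((x.2.1.2, x.2.2.2), (x.2.1.1, x.2.2.1))⟩)
    ?_ ?_ ?_ ?_ ?_
  all_goals
    rintro ⟨⟨a, b⟩, ⟨⟨c, d⟩, ⟨e, g⟩⟩⟩ h
    simp only [mem_sigma, mem_product, HasAntidiagonal.mem_antidiagonal] at h
    obtain ⟨rfl, rfl, rfl⟩ := h
    first
      | rfl
      | simp only [mem_sigma, mem_product, HasAntidiagonal.mem_antidiagonal]
        exact ⟨by omega, trivial, trivial⟩

section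

variable {k A : Type*} [CommRing k] [CommRing A] [Algebra k A] {m : ℕ∞}

theorem isHS1_iff (D : ℕ → Module.End k A) :
    IsHS1 k A m D ↔ D 0 = 1 ∧ ∀ i : ℕ, (i : ℕ∞) ≤ m → ∀ x y : A,
      D i (x * y) = ∑ p ∈ antidiagonal i, D p.1 x * D p.2 y := by
  simp only [IsHS1, Nat.sum_antidiagonal_eq_sum_range_succ_mk]

theorem isHS1_single : IsHS1 k A m (Pi.single 0 1) := by
  refine (isHS1_iff _).2 ⟨Pi.single_eq_same _ _, fun i _ x y => ?_⟩
  rcases eq_or_ne i 0 with rfl | hi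
  · simp
  rw [Pi.single_eq_of_ne hi, LinearMap.zero_apply, eq_comm]
  refine sum_eq_zero fun p hp => ?_
  rw [HasAntidiagonal.mem_antidiagonal] at hp
  rcases eq_or_ne p.1 0 with h | h
  · rw [Pi.single_eq_of_ne (show p.2 ≠ 0 by omega), LinearMap.zero_apply, mul_zero]
  · rw [Pi.single_eq_of_ne h, LinearMap.zero_apply, zero_mul]

def comp (D E : ℕ → Module.End k A) (i : ℕ) : Module.End k A :=
  ∑ p ∈ antidiagonal i, D p.1 ∘ₗ E p.2

theorem IsHS1.comp {D E : ℕ → Module.End k A} (hD : IsHS1 k A m D) (hE : IsHS1 k A m E) :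
    IsHS1 k A m (comp D E) := by
  rw [isHS1_iff] at *
  refine ⟨by simp [HS.comp, hD.1, hE.1, Module.End.one_eq_id], fun i hi x y => ?_⟩
  have hle {j : ℕ} (hj : j ≤ i) : (j : ℕ∞) ≤ m := le_trans (Nat.cast_le.2 hj) hi
  calc HS.comp D E i (x * y)
      = ∑ jw ∈ antidiagonal i, ∑ lr ∈ antidiagonal jw.2, ∑ pq ∈ antidiagonal jw.1,
          D pq.1 (E lr.1 x) * D pq.2 (E lr.2 y) := by
        simp only [HS.comp, LinearMap.sum_apply, LinearMap.comp_apply]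
        refine sum_congr rfl fun jw hjw => ?_
        rw [HasAntidiagonal.mem_antidiagonal] at hjw
        rw [hE.2 _ (hle (by omega)), map_sum]
        exact sum_congr rfl fun lr _ => hD.2 _ (hle (by omega)) _ _
    _ = ∑ st ∈ antidiagonal i, ∑ pl ∈ antidiagonal st.1, ∑ qr ∈ antidiagonal st.2,
          D pl.1 (E pl.2 x) * D qr.1 (E qr.2 y) :=
        sum_antidiagonal_antidiagonal_comm i fun p l q r => D p (E l x) * D q (E r y)
    _ = ∑ st ∈ antidiagonal i, HS.comp D E st.1 x * HS.comp D E st.2 y := by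
        simp only [HS.comp, LinearMap.sum_apply, LinearMap.comp_apply, sum_mul_sum]

theorem comp_one (D E : ℕ → Module.End k A) : comp D E 1 = D 0 ∘ₗ E 1 + D 1 ∘ₗ E 0 := by
  simp [comp, Nat.sum_antidiagonal_eq_sum_range_succ_mk, sum_range_succ]

theorem IsHS1.smul {D : ℕ → Module.End k A} (hD : IsHS1 k A m D) (a : A) :
    IsHS1 k A m (fun i => a ^ i • D i) := by
  refine (isHS1_iff _).2 ⟨by simp [hD.1], fun i hi x y => ?_⟩
  simp only [LinearMap.smul_apply, smul_eq_mul, ((isHS1_iff D).1 hD).2 i hi, mul_sum]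
  refine sum_congr rfl fun p hp => ?_
  rw [← mem_antidiagonal.1 hp, pow_add]
  ring

theorem isIntegrable_zero : IsIntegrable k A m 0 :=
  ⟨Pi.single 0 1, isHS1_single, by ext; simp⟩

theorem IsIntegrable.add {δ₁ δ₂ : Derivation k A A} (h₁ : IsIntegrable k A m δ₁)
    (h₂ : IsIntegrable k A m δ₂) : IsIntegrable k A m (δ₁ + δ₂) := by
  obtain ⟨D, hD, hD₁⟩ := h₁
  obtain ⟨E, hE, hE₁⟩ := h₂
  refine ⟨comp D E, hD.comp hE, ?_⟩
  rw [comp_one, hD.1, hE.1, hD₁, hE₁]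
  ext
  simp [add_comm]

theorem IsIntegrable.smul {δ : Derivation k A A} (h : IsIntegrable k A m δ) (a : A) :
    IsIntegrable k A m (a • δ) := by
  obtain ⟨D, hD, hD₁⟩ := h
  exact ⟨_, hD.smul a, by rw [pow_one, hD₁]; rfl⟩

end

theorem stmt11_general (k A : Type*) [CommRing k] [CommRing A] [Algebra k A]
    (m : ℕ∞) :
    IsIntegrable k A m (0 : Derivation k A A)
    ∧ (∀ δ₁ δ₂ : Derivation k A A,
        IsIntegrable k A m δ₁ → IsIntegrable k A m δ₂ → IsIntegrable k A m (δ₁ + δ₂))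
    ∧ (∀ (a : A) (δ : Derivation k A A),
        IsIntegrable k A m δ → IsIntegrable k A m (a • δ)) :=
  ⟨isIntegrable_zero, fun _ _ => IsIntegrable.add, fun a _ h => h.smul a⟩

/-- For every `m` (a positive integer or `m = ∞ = ⊤`), the set
`Ider_k(A;m)` of `m`-integrable `k`-derivations of `A` is an `A`-submodule of
`Der_k(A)`: it contains `0`, and is closed under addition and under multiplication
by elements of `A`. -/
theorem stmt11 (k A : Type*) [CommRing k] [CommRing A] [Algebra k A]
    (m : ℕ∞) (hm : 1 ≤ m) :
    IsIntegrable k A m (0 : Derivation k A A)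
    ∧ (∀ δ₁ δ₂ : Derivation k A A,
        IsIntegrable k A m δ₁ → IsIntegrable k A m δ₂ → IsIntegrable k A m (δ₁ + δ₂))
    ∧ (∀ (a : A) (δ : Derivation k A A),
        IsIntegrable k A m δ → IsIntegrable k A m (a • δ)) :=
  stmt11_general k A m

end HS
end
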